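/- Existence criterion for the shortest suffix with exactly two occurrences: let W be a string of length n ≥ 2 and let L be the longest repeating suffix of W (the longest suffix of W occurring at least twice in W; possibly empty). Then there exists a nonempty suffix S of W with #occ_W(S) = 2 if and only if L is nonempty and #occ_W(L) = 2. -/

import Mathlib

variable {α : Type*}

/-- `occursAt T S p`: the string `S` occurs at the 1-based position `p` in `T`,
i.e. `1 ≤ p ≤ |T| − |S| + 1` and `T[p..p+|S|−1] = S`. -/
def occursAt (T S : List α) (p : ℕ) : Prop :=
  1 ≤ p ∧ p + S.length ≤ T.length + 1 ∧ (T.drop (p - 1)).take S.length = S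

/-- `#occ_T(S)`: the number of positions at which `S` occurs in `T`. -/
noncomputable def occCount (T S : List α) : ℕ :=
  {p : ℕ | occursAt T S p}.ncard

/-- `sub T i ℓ = T[i..i+ℓ−1]` (1-based substring of length `ℓ` starting at `i`). -/
def sub (T : List α) (i ℓ : ℕ) : List α := (T.drop (i - 1)).take ℓ

/-- Longest previous factor array (1-based): `LPF T i` is the largest `ℓ ≥ 0` such that
the prefix `T[i..i+ℓ−1]` of `T[i..n]` also occurs at some position `j < i` in `T`. -/
noncomputable def LPF (T : List α) (i : ℕ) : ℕ :=
  @Nat.findGreatest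
    (fun ℓ => (i - 1) + ℓ ≤ T.length ∧ ∃ j, 1 ≤ j ∧ j < i ∧ occursAt T (sub T i ℓ) j)
    (Classical.decPred _) T.length

/-- Longest repeating suffix array (1-based): `LRS T i` is the length of the longest
suffix of `T[1..i]` occurring at least twice in `T[1..i]`. -/
noncomputable def LRS (T : List α) (i : ℕ) : ℕ :=
  @Nat.findGreatest
    (fun ℓ => 2 ≤ occCount (T.take i) ((T.take i).drop (i - ℓ)))
    (Classical.decPred _) i

/-!
Occurrence counts can only grow when a string is shortened to one of its suffixes: shifting an
occurrence of `S` by `|S| - |S'|` gives an occurrence of its suffix `S'`. Hence a nonempty suffix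
occurring exactly twice is repeating, so it is a suffix of `L`, and `L` occurs at most twice; being
repeating, it occurs exactly twice.
-/

theorem occursAt_drop {T S : List α} {p d : ℕ} (h : occursAt T S p) (hd : d ≤ S.length) :
    occursAt T (S.drop d) (p + d) := by
  obtain ⟨hp, hlen, htake⟩ := h
  refine ⟨by omega, by rw [List.length_drop]; omega, ?_⟩
  rw [List.length_drop, show p + d - 1 = p - 1 + d by omega, ← List.drop_drop,
    ← List.drop_take, htake]

theorem finite_setOf_occursAt (T S : List α) : {p : ℕ | occursAt T S p}.Finite :=
  (Set.finite_Iic (T.length + 1)).subset fun _ hp => by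
    have := hp.2.1
    simp only [Set.mem_Iic]
    omega

theorem occCount_le_occCount_of_isSuffix (T : List α) {S S' : List α} (h : S' <:+ S) :
    occCount T S ≤ occCount T S' := by
  set d := S.length - S'.length
  have hd : S.drop d = S' := (List.suffix_iff_eq_drop.mp h).symm
  rw [← hd]
  exact Set.ncard_le_ncard_of_injOn (· + d) (fun p hp => occursAt_drop hp (Nat.sub_le _ _))
    (fun _ _ _ _ => Nat.add_right_cancel) (finite_setOf_occursAt T (S.drop d))

theorem LRS_le (T : List α) (i : ℕ) : LRS T i ≤ i :=
  @Nat.findGreatest_le _ (Classical.decPred _) i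

theorem LRS_length_eq (T : List α) :
    LRS T T.length =
      Nat.findGreatest (fun ℓ => 2 ≤ occCount T (T.drop (T.length - ℓ))) T.length := by
  unfold LRS
  rw [List.take_length]
  congr

theorem le_LRS_length {T : List α} {ℓ : ℕ} (hℓ : ℓ ≤ T.length)
    (h : 2 ≤ occCount T (T.drop (T.length - ℓ))) : ℓ ≤ LRS T T.length := by
  rw [LRS_length_eq]
  exact Nat.le_findGreatest hℓ h

theorem two_le_occCount_drop_LRS_length {T : List α} {ℓ : ℕ} (hℓ : ℓ ≤ T.length)
    (h : 2 ≤ occCount T (T.drop (T.length - ℓ))) :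
    2 ≤ occCount T (T.drop (T.length - LRS T T.length)) := by
  rw [LRS_length_eq]
  exact Nat.findGreatest_spec (P := fun ℓ => 2 ≤ occCount T (T.drop (T.length - ℓ))) hℓ h

theorem exists_twice_suffix_iff_general (W : List α) :
    (∃ ℓ, 1 ≤ ℓ ∧ ℓ ≤ W.length ∧ occCount W (W.drop (W.length - ℓ)) = 2) ↔
    (1 ≤ LRS W W.length ∧
      occCount W (W.drop (W.length - LRS W W.length)) = 2) := by
  constructor
  · rintro ⟨ℓ, hℓ, hℓW, hocc⟩
    have hrep : 2 ≤ occCount W (W.drop (W.length - ℓ)) := hocc.ge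
    have hℓL : ℓ ≤ LRS W W.length := le_LRS_length hℓW hrep
    have hsuffix : W.drop (W.length - ℓ) <:+ W.drop (W.length - LRS W W.length) :=
      List.drop_suffix_drop_left W (by omega)
    refine ⟨hℓ.trans hℓL, le_antisymm ?_ (two_le_occCount_drop_LRS_length hℓW hrep)⟩
    exact hocc ▸ occCount_le_occCount_of_isSuffix W hsuffix
  · rintro ⟨hL, hocc⟩
    exact ⟨_, hL, LRS_le W _, hocc⟩

/-- existence criterion for the shortest suffix with exactly two
occurrences: for `|W| = n ≥ 2` with longest repeating suffix `L` (of length `LRS[n]`),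
there exists a nonempty suffix `S` of `W` with `#occ_W(S) = 2` if and only if `L` is
nonempty and `#occ_W(L) = 2`. -/
theorem exists_twice_suffix_iff (W : List α) (hn : 2 ≤ W.length) :
    (∃ ℓ, 1 ≤ ℓ ∧ ℓ ≤ W.length ∧ occCount W (W.drop (W.length - ℓ)) = 2) ↔
    (1 ≤ LRS W W.length ∧
      occCount W (W.drop (W.length - LRS W W.length)) = 2) :=
  exists_twice_suffix_iff_general W
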